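/- arXiv:1704.06209 — 3 statements merged into one kernel-verified Lean document; each statement's English description precedes it below -/
import Mathlib

section
/- Suppose the ADMM iterates for the scaled problem P̃ (with ρ̃ = (α/β²)ρ) are initialized by z̃^{(k)} = γ⁻¹z^{(k)} and ỹ^{(k)} = (α/β)y^{(k)}. Then one step of ADMM yields x̃^{(k+1)} = γ⁻¹x^{(k+1)}, z̃^{(k+1)} = γ⁻¹z^{(k+1)}, and ỹ^{(k+1)} = (α/β)y^{(k+1)}, where (x^{(k+1)}, z^{(k+1)}, y^{(k+1)}) are the iterates of ADMM for the original problem P. -/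
open Matrix BigOperators

/-- Convex subdifferential of `f` at `x` (w.r.t. the dot product on `Fin n → ℝ`). -/
def subdiff {n : ℕ} (f : (Fin n → ℝ) → ℝ) (x : Fin n → ℝ) : Set (Fin n → ℝ) :=
  {v | ∀ y, f x + v ⬝ᵥ (y - x) ≤ f y}

/-- Augmented Lagrangian for `min f(x) + g(z)  s.t.  A x + B z = c`. -/
noncomputable def augL {n m p : ℕ} (f : (Fin n → ℝ) → ℝ) (g : (Fin m → ℝ) → ℝ)
    (A : Matrix (Fin p) (Fin n) ℝ) (B : Matrix (Fin p) (Fin m) ℝ) (c : Fin p → ℝ)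
    (ρ : ℝ) (x : Fin n → ℝ) (z : Fin m → ℝ) (y : Fin p → ℝ) : ℝ :=
  f x + g z + y ⬝ᵥ (A *ᵥ x + B *ᵥ z - c) + (ρ / 2) * ∑ i, (A *ᵥ x + B *ᵥ z - c) i ^ 2

/-!
The substitution `x = γ x̃`, `z = γ z̃`, `y = (β/α) ỹ` turns the scaled augmented Lagrangian into
`α` times the original one: the residual of `P̃` is `β` times that of `P`, which the factors
`α/β` on the multiplier and `α/β²` on the penalty exactly compensate. Hence the scaled `x`- and
`z`-updates are carried by `γ •` onto minimizers of the original updates, which are the original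
iterates by uniqueness, and the multiplier updates agree after the same substitution.
-/

section

variable {n m p : ℕ} (A : Matrix (Fin p) (Fin n) ℝ) (B : Matrix (Fin p) (Fin m) ℝ)
  (c : Fin p → ℝ)

lemma scaled_residual_eq (β γ : ℝ) (x : Fin n → ℝ) (z : Fin m → ℝ) :
    ((β * γ) • A) *ᵥ x + ((β * γ) • B) *ᵥ z - β • c
      = β • (A *ᵥ (γ • x) + B *ᵥ (γ • z) - c) := by
  simp only [smul_mulVec, mulVec_smul, mul_smul, smul_add, smul_sub]

lemma augL_scaled_eq (f : (Fin n → ℝ) → ℝ) (g : (Fin m → ℝ) → ℝ) {β : ℝ} (hβ : β ≠ 0)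
    (α γ ρ : ℝ) (x : Fin n → ℝ) (z : Fin m → ℝ) (y : Fin p → ℝ) :
    augL (fun x => α * f (γ • x)) (fun z => α * g (γ • z))
        ((β * γ) • A) ((β * γ) • B) (β • c) ((α / β ^ 2) * ρ) x z ((α / β) • y)
      = α * augL f g A B c ρ (γ • x) (γ • z) y := by
  simp only [augL, scaled_residual_eq]
  set r := A *ᵥ (γ • x) + B *ᵥ (γ • z) - c
  have hdot : ((α / β) • y) ⬝ᵥ (β • r) = α * (y ⬝ᵥ r) := by
    rw [smul_dotProduct, dotProduct_smul, smul_eq_mul, smul_eq_mul]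
    field_simp
  have hsq : ∑ i, (β • r) i ^ 2 = β ^ 2 * ∑ i, r i ^ 2 := by
    simp only [Pi.smul_apply, smul_eq_mul, mul_pow, Finset.mul_sum]
  rw [hdot, hsq]
  field_simp

end

lemma forall_le_of_forall_mul_le_comp_smul {𝕜 E : Type*} [Field 𝕜] [AddCommGroup E]
    [Module 𝕜 E] {F : E → ℝ} {α : ℝ} {γ : 𝕜} (hα : 0 < α) (hγ : γ ≠ 0) {a : E}
    (h : ∀ x, α * F (γ • a) ≤ α * F (γ • x)) (x : E) : F (γ • a) ≤ F x := by
  have := h (γ⁻¹ • x)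
  rw [smul_inv_smul₀ hγ] at this
  exact le_of_mul_le_mul_left this hα

theorem admm_iterate_scaling_general {n m p : ℕ}
    (f : (Fin n → ℝ) → ℝ) (g : (Fin m → ℝ) → ℝ)
    (A : Matrix (Fin p) (Fin n) ℝ) (B : Matrix (Fin p) (Fin m) ℝ) (c : Fin p → ℝ)
    (α β γ ρ : ℝ) (hα : 0 < α) (hβ : 0 < β) (hγ : 0 < γ)
    (z0 : Fin m → ℝ) (y0 : Fin p → ℝ)
    (x1 : Fin n → ℝ) (z1 : Fin m → ℝ) (y1 : Fin p → ℝ)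
    -- original ADMM step, with unique minimizers
    (hx1u : ∀ x', (∀ x, augL f g A B c ρ x' z0 y0 ≤ augL f g A B c ρ x z0 y0) → x' = x1)
    (hz1u : ∀ z', (∀ z, augL f g A B c ρ x1 z' y0 ≤ augL f g A B c ρ x1 z y0) → z' = z1)
    (hy1 : y1 = y0 + ρ • (A *ᵥ x1 + B *ᵥ z1 - c))
    -- scaled ADMM step
    (xt1 : Fin n → ℝ) (zt1 : Fin m → ℝ) (yt1 : Fin p → ℝ)
    (hxt1 : ∀ x, augL (fun x => α * f (γ • x)) (fun z => α * g (γ • z))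
        ((β * γ) • A) ((β * γ) • B) (β • c) ((α / β ^ 2) * ρ)
        xt1 (γ⁻¹ • z0) ((α / β) • y0) ≤
      augL (fun x => α * f (γ • x)) (fun z => α * g (γ • z))
        ((β * γ) • A) ((β * γ) • B) (β • c) ((α / β ^ 2) * ρ)
        x (γ⁻¹ • z0) ((α / β) • y0))
    (hzt1 : ∀ z, augL (fun x => α * f (γ • x)) (fun z => α * g (γ • z))
        ((β * γ) • A) ((β * γ) • B) (β • c) ((α / β ^ 2) * ρ)
        xt1 zt1 ((α / β) • y0) ≤
      augL (fun x => α * f (γ • x)) (fun z => α * g (γ • z))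
        ((β * γ) • A) ((β * γ) • B) (β • c) ((α / β ^ 2) * ρ)
        xt1 z ((α / β) • y0))
    (hyt1 : yt1 = (α / β) • y0 + ((α / β ^ 2) * ρ) •
        (((β * γ) • A) *ᵥ xt1 + ((β * γ) • B) *ᵥ zt1 - β • c)) :
    xt1 = γ⁻¹ • x1 ∧ zt1 = γ⁻¹ • z1 ∧ yt1 = (α / β) • y1 := by
  have hβ₀ : β ≠ 0 := hβ.ne'
  have hγ₀ : γ ≠ 0 := hγ.ne'
  simp only [augL_scaled_eq A B c f g hβ₀, smul_inv_smul₀ hγ₀] at hxt1 hzt1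
  obtain rfl : γ • xt1 = x1 := hx1u _ <|
    forall_le_of_forall_mul_le_comp_smul (F := fun x => augL f g A B c ρ x z0 y0) hα hγ₀ hxt1
  obtain rfl : γ • zt1 = z1 := hz1u _ <|
    forall_le_of_forall_mul_le_comp_smul (F := fun z => augL f g A B c ρ (γ • xt1) z y0) hα hγ₀ hzt1
  refine ⟨(inv_smul_smul₀ hγ₀ xt1).symm, (inv_smul_smul₀ hγ₀ zt1).symm, ?_⟩
  rw [hyt1, hy1, scaled_residual_eq, smul_smul, smul_add, smul_smul]
  congr 2
  field_simp

/-- One ADMM step for the scaled problem `P̃` (with `ρ̃ = (α/β²)ρ`), started from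
`z̃ = γ⁻¹z⁰`, `ỹ = (α/β)y⁰`, produces `x̃¹ = γ⁻¹x¹`, `z̃¹ = γ⁻¹z¹`,
`ỹ¹ = (α/β)y¹`, where `(x¹, z¹, y¹)` is the ADMM step for `P`. -/
theorem admm_iterate_scaling {n m p : ℕ}
    (f : (Fin n → ℝ) → ℝ) (g : (Fin m → ℝ) → ℝ)
    (A : Matrix (Fin p) (Fin n) ℝ) (B : Matrix (Fin p) (Fin m) ℝ) (c : Fin p → ℝ)
    (α β γ ρ : ℝ) (hα : 0 < α) (hβ : 0 < β) (hγ : 0 < γ) (hρ : 0 < ρ)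
    (hf : ConvexOn ℝ Set.univ f) (hg : ConvexOn ℝ Set.univ g)
    (z0 : Fin m → ℝ) (y0 : Fin p → ℝ)
    (x1 : Fin n → ℝ) (z1 : Fin m → ℝ) (y1 : Fin p → ℝ)
    -- original ADMM step, with unique minimizers
    (hx1 : ∀ x, augL f g A B c ρ x1 z0 y0 ≤ augL f g A B c ρ x z0 y0)
    (hx1u : ∀ x', (∀ x, augL f g A B c ρ x' z0 y0 ≤ augL f g A B c ρ x z0 y0) → x' = x1)
    (hz1 : ∀ z, augL f g A B c ρ x1 z1 y0 ≤ augL f g A B c ρ x1 z y0)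
    (hz1u : ∀ z', (∀ z, augL f g A B c ρ x1 z' y0 ≤ augL f g A B c ρ x1 z y0) → z' = z1)
    (hy1 : y1 = y0 + ρ • (A *ᵥ x1 + B *ᵥ z1 - c))
    -- scaled ADMM step
    (xt1 : Fin n → ℝ) (zt1 : Fin m → ℝ) (yt1 : Fin p → ℝ)
    (hxt1 : ∀ x, augL (fun x => α * f (γ • x)) (fun z => α * g (γ • z))
        ((β * γ) • A) ((β * γ) • B) (β • c) ((α / β ^ 2) * ρ)
        xt1 (γ⁻¹ • z0) ((α / β) • y0) ≤
      augL (fun x => α * f (γ • x)) (fun z => α * g (γ • z))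
        ((β * γ) • A) ((β * γ) • B) (β • c) ((α / β ^ 2) * ρ)
        x (γ⁻¹ • z0) ((α / β) • y0))
    (hzt1 : ∀ z, augL (fun x => α * f (γ • x)) (fun z => α * g (γ • z))
        ((β * γ) • A) ((β * γ) • B) (β • c) ((α / β ^ 2) * ρ)
        xt1 zt1 ((α / β) • y0) ≤
      augL (fun x => α * f (γ • x)) (fun z => α * g (γ • z))
        ((β * γ) • A) ((β * γ) • B) (β • c) ((α / β ^ 2) * ρ)
        xt1 z ((α / β) • y0))
    (hyt1 : yt1 = (α / β) • y0 + ((α / β ^ 2) * ρ) •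
        (((β * γ) • A) *ᵥ xt1 + ((β * γ) • B) *ᵥ zt1 - β • c)) :
    xt1 = γ⁻¹ • x1 ∧ zt1 = γ⁻¹ • z1 ∧ yt1 = (α / β) • y1 :=
  admm_iterate_scaling_general f g A B c α β γ ρ hα hβ hγ z0 y0 x1 z1 y1 hx1u hz1u hy1 xt1 zt1 yt1
    hxt1 hzt1 hyt1
end

section
/- Relative-residual stopping criteria with ε_abs = 0 are invariant under problem scaling: if ‖r_rel^{(k)}‖₂ ≤ ε_rel and ‖s_rel^{(k)}‖₂ ≤ ε_rel hold for problem P, they hold with identical values for the scaled problem P̃ under the iterate correspondence x̃ = γ⁻¹x, z̃ = γ⁻¹z, ỹ = (α/β)y, ρ̃ = (α/β²)ρ. -/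
/-!
Scaling the data by `βγ` and the primal iterates by `γ⁻¹` multiplies the primal residual and each
of the three norms in its normalisation by `β`; the dual residual and its normalisation
`‖Ãᵀỹ‖₂` are both multiplied by `αγ`. Hence the relative residuals of the scaled problem are
literally the same vectors as those of the original one.
-/

open Matrix BigOperators

/-- Euclidean norm on `Fin p → ℝ`. -/
noncomputable def euclidEnorm {p : ℕ} (v : Fin p → ℝ) : ℝ := Real.sqrt (∑ i, v i ^ 2)

lemma euclidEnorm_smul {q : ℕ} (t : ℝ) (v : Fin q → ℝ) :
    euclidEnorm (t • v) = |t| * euclidEnorm v := by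
  unfold euclidEnorm
  rw [← Real.sqrt_sq_eq_abs, ← Real.sqrt_mul (sq_nonneg t), Finset.mul_sum]
  simp only [Pi.smul_apply, smul_eq_mul, mul_pow]

lemma inv_mul_smul_smul_cancel_left {V : Type*} [AddCommGroup V] [Module ℝ V]
    {t : ℝ} (ht : t ≠ 0) (d : ℝ) (v : V) : (t * d)⁻¹ • t • v = d⁻¹ • v := by
  rw [smul_smul, mul_inv, mul_right_comm, inv_mul_cancel₀ ht, one_mul]

lemma smul_mulVec_smul {k l : ℕ} (s t : ℝ) (M : Matrix (Fin k) (Fin l) ℝ) (v : Fin l → ℝ) :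
    (s • M) *ᵥ (t • v) = (s * t) • (M *ᵥ v) := by
  rw [smul_mulVec, mulVec_smul, smul_smul]

section RelativeResiduals

variable {n m p : ℕ} (A : Matrix (Fin p) (Fin n) ℝ) (B : Matrix (Fin p) (Fin m) ℝ)

noncomputable def relPrimalResidual (c : Fin p → ℝ) (x : Fin n → ℝ) (z : Fin m → ℝ) :
    Fin p → ℝ :=
  (max (euclidEnorm (A *ᵥ x)) (max (euclidEnorm (B *ᵥ z)) (euclidEnorm c)))⁻¹ •
    (A *ᵥ x + B *ᵥ z - c)

/-- `z₀` is the previous iterate `z^{(k−1)}`. -/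
noncomputable def relDualResidual (ρ : ℝ) (y : Fin p → ℝ) (z z₀ : Fin m → ℝ) : Fin n → ℝ :=
  (euclidEnorm (Aᵀ *ᵥ y))⁻¹ • (ρ • (Aᵀ *ᵥ (B *ᵥ (z - z₀))))

theorem relPrimalResidual_scale (c : Fin p → ℝ) (x : Fin n → ℝ) (z : Fin m → ℝ)
    {β γ : ℝ} (hβ : 0 < β) (hγ : γ ≠ 0) :
    relPrimalResidual ((β * γ) • A) ((β * γ) • B) (β • c) (γ⁻¹ • x) (γ⁻¹ • z) =
      relPrimalResidual A B c x z := by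
  have hscale : β * γ * γ⁻¹ = β := by field_simp
  simp only [relPrimalResidual, smul_mulVec_smul, hscale, euclidEnorm_smul, abs_of_pos hβ,
    ← mul_max_of_nonneg _ _ hβ.le, ← smul_add, ← smul_sub]
  exact inv_mul_smul_smul_cancel_left hβ.ne' _ _

theorem relDualResidual_scale (ρ : ℝ) (y : Fin p → ℝ) (z z₀ : Fin m → ℝ)
    {α β γ : ℝ} (hα : 0 < α) (hβ : β ≠ 0) (hγ : 0 < γ) :
    relDualResidual ((β * γ) • A) ((β * γ) • B) ((α / β ^ 2) * ρ) ((α / β) • y)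
        (γ⁻¹ • z) (γ⁻¹ • z₀) =
      relDualResidual A B ρ y z z₀ := by
  have hαγ : 0 < α * γ := mul_pos hα hγ
  have hdenom : ((β * γ) • A)ᵀ *ᵥ ((α / β) • y) = (α * γ) • (Aᵀ *ᵥ y) := by
    rw [transpose_smul, smul_mulVec_smul]
    congr 1
    field_simp
  have hnumer : ((α / β ^ 2) * ρ) • (((β * γ) • A)ᵀ *ᵥ (((β * γ) • B) *ᵥ (γ⁻¹ • z - γ⁻¹ • z₀))) =
      (α * γ) • (ρ • (Aᵀ *ᵥ (B *ᵥ (z - z₀)))) := by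
    rw [← smul_sub, transpose_smul, smul_mulVec_smul, smul_mulVec, mulVec_smul, smul_smul,
      smul_smul, smul_smul]
    congr 1
    field_simp
  rw [relDualResidual, hdenom, hnumer, euclidEnorm_smul, abs_of_pos hαγ]
  exact inv_mul_smul_smul_cancel_left hαγ.ne' _ _

end RelativeResiduals

theorem stopping_criteria_invariance_general {n m p : ℕ}
    (A : Matrix (Fin p) (Fin n) ℝ) (B : Matrix (Fin p) (Fin m) ℝ) (c : Fin p → ℝ)
    (α β γ ρ εrel : ℝ) (hα : 0 < α) (hβ : 0 < β) (hγ : 0 < γ)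
    (xk : Fin n → ℝ) (zk zk0 : Fin m → ℝ) (yk : Fin p → ℝ)
    (hrstop : euclidEnorm ((max (euclidEnorm (A *ᵥ xk)) (max (euclidEnorm (B *ᵥ zk)) (euclidEnorm c)))⁻¹ •
        (A *ᵥ xk + B *ᵥ zk - c)) ≤ εrel)
    (hsstop : euclidEnorm ((euclidEnorm (Aᵀ *ᵥ yk))⁻¹ •
        (ρ • (Aᵀ *ᵥ (B *ᵥ (zk - zk0))))) ≤ εrel) :
    euclidEnorm ((max (euclidEnorm (((β * γ) • A) *ᵥ (γ⁻¹ • xk)))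
          (max (euclidEnorm (((β * γ) • B) *ᵥ (γ⁻¹ • zk))) (euclidEnorm (β • c))))⁻¹ •
        (((β * γ) • A) *ᵥ (γ⁻¹ • xk) + ((β * γ) • B) *ᵥ (γ⁻¹ • zk) - β • c)) ≤ εrel ∧
    euclidEnorm ((euclidEnorm (((β * γ) • A)ᵀ *ᵥ ((α / β) • yk)))⁻¹ •
        (((α / β ^ 2) * ρ) •
          (((β * γ) • A)ᵀ *ᵥ (((β * γ) • B) *ᵥ ((γ⁻¹ • zk) - (γ⁻¹ • zk0)))))) ≤ εrel := by
  change euclidEnorm (relPrimalResidual _ _ _ _ _) ≤ εrel ∧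
    euclidEnorm (relDualResidual _ _ _ _ _ _) ≤ εrel
  rw [relPrimalResidual_scale A B c xk zk hβ hγ.ne', relDualResidual_scale A B ρ yk zk zk0 hα hβ.ne' hγ]
  exact ⟨hrstop, hsstop⟩

/-- Relative-residual stopping criteria (with `ε_abs = 0`) are invariant under
the problem scaling `Ã = βγA`, `B̃ = βγB`, `c̃ = βc`, `ρ̃ = (α/β²)ρ`,
`x̃ = γ⁻¹x`, `z̃ = γ⁻¹z`, `ỹ = (α/β)y`. -/
theorem stopping_criteria_invariance {n m p : ℕ}
    (A : Matrix (Fin p) (Fin n) ℝ) (B : Matrix (Fin p) (Fin m) ℝ) (c : Fin p → ℝ)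
    (α β γ ρ εrel : ℝ) (hα : 0 < α) (hβ : 0 < β) (hγ : 0 < γ) (hρ : 0 < ρ)
    (xk : Fin n → ℝ) (zk zk0 : Fin m → ℝ) (yk : Fin p → ℝ)
    (hden1 : max (euclidEnorm (A *ᵥ xk)) (max (euclidEnorm (B *ᵥ zk)) (euclidEnorm c)) ≠ 0)
    (hden2 : euclidEnorm (Aᵀ *ᵥ yk) ≠ 0)
    (hrstop : euclidEnorm ((max (euclidEnorm (A *ᵥ xk)) (max (euclidEnorm (B *ᵥ zk)) (euclidEnorm c)))⁻¹ •
        (A *ᵥ xk + B *ᵥ zk - c)) ≤ εrel)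
    (hsstop : euclidEnorm ((euclidEnorm (Aᵀ *ᵥ yk))⁻¹ •
        (ρ • (Aᵀ *ᵥ (B *ᵥ (zk - zk0))))) ≤ εrel) :
    euclidEnorm ((max (euclidEnorm (((β * γ) • A) *ᵥ (γ⁻¹ • xk)))
          (max (euclidEnorm (((β * γ) • B) *ᵥ (γ⁻¹ • zk))) (euclidEnorm (β • c))))⁻¹ •
        (((β * γ) • A) *ᵥ (γ⁻¹ • xk) + ((β * γ) • B) *ᵥ (γ⁻¹ • zk) - β • c)) ≤ εrel ∧
    euclidEnorm ((euclidEnorm (((β * γ) • A)ᵀ *ᵥ ((α / β) • yk)))⁻¹ •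
        (((α / β ^ 2) * ρ) •
          (((β * γ) • A)ᵀ *ᵥ (((β * γ) • B) *ᵥ ((γ⁻¹ • zk) - (γ⁻¹ • zk0)))))) ≤ εrel :=
  stopping_criteria_invariance_general A B c α β γ ρ εrel hα hβ hγ xk zk zk0 yk hrstop hsstop
end

section
/- Suboptimality bound via residuals: if x^{(k)} minimizes L_ρ(x, z^{(k−1)}, y^{(k−1)}) and z^{(k)} minimizes L_ρ(x^{(k)}, z, y^{(k−1)}), with y^{(k)} = y^{(k−1)} + ρ r^{(k)}, then f(x^{(k)}) + g(z^{(k)}) − p* ≤ −(y^{(k)})ᵀ r^{(k)} + (x^{(k)} − x*)ᵀ s^{(k)}, where (x*, z*) is optimal for the constrained problem, p* = f(x*) + g(z*), r^{(k)} = Ax^{(k)} + Bz^{(k)} − c, and s^{(k)} = ρAᵀB(z^{(k)} − z^{(k−1)}). -/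
open Matrix BigOperators

/-- If `0 ≤ C + t*q` for all `t ∈ (0,1]` and `0 ≤ q`, then `0 ≤ C`. -/
lemma nonneg_of_forall_Ioc {C q : ℝ} (hq : 0 ≤ q)
    (h : ∀ t : ℝ, 0 < t → t ≤ 1 → 0 ≤ C + t * q) : 0 ≤ C := by
  by_contra hC
  push_neg at hC
  have ht1 : (0:ℝ) < min 1 ((-C) / (2 * (q + 1))) :=
    lt_min one_pos (div_pos (by linarith) (by linarith))
  have ht2 : min 1 ((-C) / (2 * (q + 1))) ≤ 1 := min_le_left _ _
  have := h _ ht1 ht2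
  have hle : min 1 ((-C) / (2 * (q + 1))) ≤ (-C) / (2 * (q + 1)) := min_le_right _ _
  have hq1 : (0:ℝ) < 2 * (q + 1) := by linarith
  nlinarith [mul_le_mul_of_nonneg_right hle hq, div_mul_cancel₀ (-C) (ne_of_gt hq1)]

/-- Subgradient from minimization of `f + ψ` where `ψ` expands quadratically. -/
lemma subgrad_of_min {n : ℕ} {f ψ : (Fin n → ℝ) → ℝ} (hf : ConvexOn ℝ Set.univ f)
    {x0 g : Fin n → ℝ} {q : (Fin n → ℝ) → ℝ} (hq : ∀ d, 0 ≤ q d)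
    (hψ : ∀ d t, ψ (x0 + t • d) = ψ x0 + t * (g ⬝ᵥ d) + t ^ 2 * q d)
    (hmin : ∀ x, f x0 + ψ x0 ≤ f x + ψ x) :
    ∀ x, f x0 + (g ⬝ᵥ (x0 - x)) ≤ f x := by
  intro x
  set d : Fin n → ℝ := x - x0 with hd
  have key : 0 ≤ (f x - f x0 - g ⬝ᵥ (x0 - x)) := by
    apply nonneg_of_forall_Ioc (hq d)
    intro t ht0 ht1
    have hpt : x0 + t • d = (1 - t) • x0 + t • x := by
      funext i
      simp [hd, Pi.smul_apply, smul_eq_mul]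
      ring
    have hcv : f (x0 + t • d) ≤ (1 - t) * f x0 + t * f x := by
      rw [hpt]
      exact hf.2 (Set.mem_univ x0) (Set.mem_univ x) (by linarith) (le_of_lt ht0) (by ring)
    have hm := hmin (x0 + t • d)
    rw [hψ d t] at hm
    have hgd : g ⬝ᵥ (x0 - x) = -(g ⬝ᵥ d) := by
      rw [show x0 - x = -d by rw [hd]; abel, dotProduct_neg]
    rw [hgd]
    nlinarith [sq_nonneg t]
  linarith

lemma quad_expand {p n : ℕ} (A : Matrix (Fin p) (Fin n) ℝ) (b y : Fin p → ℝ) (ρ : ℝ)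
    (x0 d : Fin n → ℝ) (t : ℝ) :
    y ⬝ᵥ (A *ᵥ (x0 + t • d) + b) + (ρ/2) * ∑ i, (A *ᵥ (x0 + t • d) + b) i ^ 2
    = (y ⬝ᵥ (A *ᵥ x0 + b) + (ρ/2) * ∑ i, (A *ᵥ x0 + b) i ^ 2)
      + t * ((Aᵀ *ᵥ (y + ρ • (A *ᵥ x0 + b))) ⬝ᵥ d)
      + t ^ 2 * ((ρ/2) * ((A *ᵥ d) ⬝ᵥ (A *ᵥ d))) := by
  have hsum : ∀ w : Fin p → ℝ, ∑ i, w i ^ 2 = w ⬝ᵥ w := by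
    intro w; simp [dotProduct, sq]
  rw [hsum, hsum]
  simp only [Matrix.mulVec_add, Matrix.mulVec_smul, Matrix.mulVec_transpose,
    Matrix.dotProduct_mulVec, Matrix.add_vecMul,
    Matrix.smul_vecMul, add_dotProduct, dotProduct_add, smul_dotProduct,
    dotProduct_smul, smul_eq_mul]
  have e1 : (A *ᵥ d) ᵥ* A ⬝ᵥ x0 = (A *ᵥ x0) ᵥ* A ⬝ᵥ d := by
    rw [← Matrix.dotProduct_mulVec, ← Matrix.dotProduct_mulVec, dotProduct_comm]
  have e2 : A *ᵥ d ⬝ᵥ b = b ᵥ* A ⬝ᵥ d := by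
    rw [← Matrix.dotProduct_mulVec, dotProduct_comm]
  rw [e1, e2]; ring

lemma transp_dot {p n : ℕ} (A : Matrix (Fin p) (Fin n) ℝ) (u : Fin p → ℝ) (v : Fin n → ℝ) :
    (Aᵀ *ᵥ u) ⬝ᵥ v = u ⬝ᵥ (A *ᵥ v) := by
  rw [Matrix.mulVec_transpose, ← Matrix.dotProduct_mulVec]

/-- Suboptimality bound via residuals:
`f(xᵏ) + g(zᵏ) − p* ≤ −(yᵏ)ᵀ rᵏ + (xᵏ − x*)ᵀ sᵏ`. -/
theorem admm_suboptimality_bound {n m p : ℕ}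
    (f : (Fin n → ℝ) → ℝ) (g : (Fin m → ℝ) → ℝ)
    (A : Matrix (Fin p) (Fin n) ℝ) (B : Matrix (Fin p) (Fin m) ℝ) (c : Fin p → ℝ)
    (ρ : ℝ) (hρ : 0 < ρ)
    (hf : ConvexOn ℝ Set.univ f) (hg : ConvexOn ℝ Set.univ g)
    (xs : Fin n → ℝ) (zs : Fin m → ℝ)
    (hfeas : A *ᵥ xs + B *ᵥ zs = c)
    (hopt : ∀ x z, A *ᵥ x + B *ᵥ z = c → f xs + g zs ≤ f x + g z)
    (xk : Fin n → ℝ) (zk zk0 : Fin m → ℝ) (yk yk0 : Fin p → ℝ)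
    (hx : ∀ x, augL f g A B c ρ xk zk0 yk0 ≤ augL f g A B c ρ x zk0 yk0)
    (hz : ∀ z, augL f g A B c ρ xk zk yk0 ≤ augL f g A B c ρ xk z yk0)
    (hy : yk = yk0 + ρ • (A *ᵥ xk + B *ᵥ zk - c)) :
    f xk + g zk - (f xs + g zs) ≤
      -(yk ⬝ᵥ (A *ᵥ xk + B *ᵥ zk - c)) +
        (xk - xs) ⬝ᵥ (ρ • (Aᵀ *ᵥ (B *ᵥ (zk - zk0)))) := by
  -- residuals and subgradient vectors
  set bx : Fin p → ℝ := B *ᵥ zk0 - c with hbx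
  set bz : Fin p → ℝ := A *ᵥ xk - c with hbz
  have hqA : ∀ d : Fin n → ℝ, 0 ≤ (ρ/2) * ((A *ᵥ d) ⬝ᵥ (A *ᵥ d)) := by
    intro d
    apply mul_nonneg (by linarith)
    exact Finset.sum_nonneg fun i _ => mul_self_nonneg _
  have hqB : ∀ d : Fin m → ℝ, 0 ≤ (ρ/2) * ((B *ᵥ d) ⬝ᵥ (B *ᵥ d)) := by
    intro d
    apply mul_nonneg (by linarith)
    exact Finset.sum_nonneg fun i _ => mul_self_nonneg _
  -- x-step subgradient inequality
  have h1 : ∀ x, f xk + ((Aᵀ *ᵥ (yk0 + ρ • (A *ᵥ xk + bx))) ⬝ᵥ (xk - x)) ≤ f x := by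
    refine subgrad_of_min (ψ := fun x => g zk0 +
      (yk0 ⬝ᵥ (A *ᵥ x + bx) + (ρ/2) * ∑ i, (A *ᵥ x + bx) i ^ 2)) hf hqA ?_ ?_
    · intro d t
      rw [quad_expand]; ring
    · intro x
      have e : ∀ x, augL f g A B c ρ x zk0 yk0 = f x + (g zk0 +
          (yk0 ⬝ᵥ (A *ᵥ x + bx) + (ρ/2) * ∑ i, (A *ᵥ x + bx) i ^ 2)) := by
        intro x
        rw [augL, hbx, ← add_sub_assoc]; ring
      rw [← e, ← e]; exact hx x
  -- z-step subgradient inequality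
  have h2 : ∀ z, g zk + ((Bᵀ *ᵥ (yk0 + ρ • (B *ᵥ zk + bz))) ⬝ᵥ (zk - z)) ≤ g z := by
    refine subgrad_of_min (ψ := fun z => f xk +
      (yk0 ⬝ᵥ (B *ᵥ z + bz) + (ρ/2) * ∑ i, (B *ᵥ z + bz) i ^ 2)) hg hqB ?_ ?_
    · intro d t
      rw [quad_expand]; ring
    · intro z
      have e : ∀ z, augL f g A B c ρ xk z yk0 = g z + (f xk +
          (yk0 ⬝ᵥ (B *ᵥ z + bz) + (ρ/2) * ∑ i, (B *ᵥ z + bz) i ^ 2)) := by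
        intro z
        have : A *ᵥ xk + B *ᵥ z - c = B *ᵥ z + bz := by rw [hbz]; abel
        rw [augL, this]; ring
      rw [← e, ← e]; exact hz z
  have h1s := h1 xs
  have h2s := h2 zs
  -- rewrite the subgradient dot products
  rw [transp_dot] at h1s h2s
  -- identify the multipliers
  have hu1 : yk0 + ρ • (A *ᵥ xk + bx) = yk - ρ • (B *ᵥ (zk - zk0)) := by
    rw [hy, hbx, Matrix.mulVec_sub]
    funext i
    simp [Pi.smul_apply, smul_eq_mul]
    ring
  have hu2 : yk0 + ρ • (B *ᵥ zk + bz) = yk := by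
    rw [hy, hbz]
    funext i
    simp [Pi.smul_apply, smul_eq_mul]
    ring
  rw [hu1] at h1s
  rw [hu2] at h2s
  -- expand the two dot products
  have e1 : (yk - ρ • (B *ᵥ (zk - zk0))) ⬝ᵥ (A *ᵥ (xk - xs))
      = yk ⬝ᵥ (A *ᵥ (xk - xs)) - ρ * ((B *ᵥ (zk - zk0)) ⬝ᵥ (A *ᵥ (xk - xs))) := by
    rw [sub_dotProduct, smul_dotProduct, smul_eq_mul]
  have e3 : (xk - xs) ⬝ᵥ (ρ • (Aᵀ *ᵥ (B *ᵥ (zk - zk0))))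
      = ρ * ((B *ᵥ (zk - zk0)) ⬝ᵥ (A *ᵥ (xk - xs))) := by
    rw [dotProduct_smul, smul_eq_mul, dotProduct_comm, transp_dot]
  have e4 : yk ⬝ᵥ (A *ᵥ (xk - xs)) + yk ⬝ᵥ (B *ᵥ (zk - zs))
      = yk ⬝ᵥ (A *ᵥ xk + B *ᵥ zk - c) := by
    rw [← dotProduct_add]
    congr 1
    rw [Matrix.mulVec_sub, Matrix.mulVec_sub, ← hfeas]
    abel
  rw [e1] at h1s
  linarith [h1s, h2s, e3, e4]
end
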